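/- Fix 0 < p < 1, q = 1-p, ℓ ≥ 1, and let f(w) = 1 - w + p^ℓ q w^{ℓ+1}. Then f(1/p) = 0, f has exactly two positive real roots w₀ and 1/p (counted with multiplicity, coinciding when p = ℓ/(ℓ+1)), the root w₀ satisfies 1 < w₀, and: if p < ℓ/(ℓ+1) then w₀ < (ℓ+1)/ℓ < 1/(p((ℓ+1)q)^{1/ℓ}) < 1/p; if p > ℓ/(ℓ+1) then 1/p < (ℓ+1)/ℓ < 1/(p((ℓ+1)q)^{1/ℓ}) < w₀; if p = ℓ/(ℓ+1) then w₀ = 1/p = (ℓ+1)/ℓ. -/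

import Mathlib

open scoped Classical
open Finset Filter

noncomputable section

/-- Weight (probability) of a Boolean string of length `n` under i.i.d. Bernoulli(p). -/
def wt (p : ℝ) {n : ℕ} (x : Fin n → Bool) : ℝ :=
  ∏ i, (if x i then p else 1 - p)

/-- Extend a finite string by `false`. -/
def pad {n : ℕ} (x : Fin n → Bool) : ℕ → Bool :=
  fun i => if h : i < n then x ⟨i, h⟩ else false

/-- A maximal run of 1's of length exactly `ℓ` starts at position `i` (0-indexed)
within the first `n` positions. -/
def IsRunAt (x : ℕ → Bool) (n i ℓ : ℕ) : Prop :=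
  1 ≤ ℓ ∧ i + ℓ ≤ n ∧ (∀ k < ℓ, x (i + k) = true) ∧
    (i = 0 ∨ x (i - 1) = false) ∧ (i + ℓ = n ∨ x (i + ℓ) = false)

/-- `R_ℓ(n)`: the number of maximal runs of 1's of length exactly `ℓ` in the first `n` tosses. -/
def runCount (x : ℕ → Bool) (n ℓ : ℕ) : ℕ :=
  ((Finset.range n).filter (fun i => IsRunAt x n i ℓ)).card

/-- `G_ℓ(n)`: the number of maximal runs of 1's of length at least `ℓ` in the first `n` tosses. -/
def excCount (x : ℕ → Bool) (n ℓ : ℕ) : ℕ :=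
  ∑ k ∈ Finset.Icc ℓ n, runCount x n k

/-- `L(n)`: the length of the longest run of 1's in the first `n` tosses. -/
def longestRun (x : ℕ → Bool) (n : ℕ) : ℕ :=
  (Finset.range (n + 1)).sup
    (fun ℓ => if ∃ i, i + ℓ ≤ n ∧ ∀ k < ℓ, x (i + k) = true then ℓ else 0)

/-- Expectation of a (real) functional of `n` i.i.d. Bernoulli(p) tosses. -/
def Ex (p : ℝ) (n : ℕ) (f : (ℕ → Bool) → ℝ) : ℝ :=
  ∑ x : Fin n → Bool, wt p x * f (pad x)

/-- Expectation of a complex functional of `n` i.i.d. Bernoulli(p) tosses. -/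
def ExC (p : ℝ) (n : ℕ) (f : (ℕ → Bool) → ℂ) : ℂ :=
  ∑ x : Fin n → Bool, (wt p x : ℂ) * f (pad x)

/-- Probability of an event depending on the first `n` i.i.d. Bernoulli(p) tosses. -/
def Pr (p : ℝ) (n : ℕ) (A : Set (ℕ → Bool)) : ℝ :=
  ∑ x : Fin n → Bool, if pad x ∈ A then wt p x else 0

/-- Binomial coefficient with integer upper argument, vanishing for negative upper argument. -/
def C (a : ℤ) (b : ℕ) : ℝ :=
  if a < 0 then 0 else (a.toNat).choose b


/-!
Write `f(w) = 1 - w + A w^{ℓ+1}` with `A = p^ℓ q`. Since `f'(w) = A(ℓ+1)w^ℓ - 1`, `f` decreases on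
`[0, c]` and increases on `[c, ∞)`, where `c = 1/(p((ℓ+1)q)^{1/ℓ})` is its critical point; so `f`
has at most one root on each side of `c`, and `1/p` is one of them. At the critical point
`A c^{ℓ+1} = c/(ℓ+1)`, so `f(c) = 1 - cℓ/(ℓ+1)`: the minimum value `f(c) ≤ f(1/p) = 0` is negative,
i.e. `(ℓ+1)/ℓ < c`, exactly when `c ≠ 1/p`. Which side of `c` the root `1/p` lies on is decided by
comparing `(ℓ+1)q` with `1`, i.e. `p` with `ℓ/(ℓ+1)`. The other root is found by the intermediate
value theorem: on `(1, (ℓ+1)/ℓ)` since `f(1) = A > 0 > f((ℓ+1)/ℓ)`, or on `(c, 1/A)`.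
-/

def runPoly (A : ℝ) (n : ℕ) (w : ℝ) : ℝ := 1 - w + A * w ^ (n + 1)

section RunPoly

variable {A c : ℝ} {n : ℕ}

lemma continuous_runPoly (A : ℝ) (n : ℕ) : Continuous (runPoly A n) := by
  unfold runPoly; fun_prop

lemma hasDerivAt_runPoly (A : ℝ) (n : ℕ) (w : ℝ) :
    HasDerivAt (runPoly A n) (A * (n + 1) * w ^ n - 1) w := by
  refine (((hasDerivAt_id w).const_sub 1).add
    ((hasDerivAt_pow (n + 1) w).const_mul A)).congr_deriv ?_
  push_cast
  ring

lemma runPoly_strictAntiOn (hA : 0 < A) (hn : n ≠ 0) (hc : A * (n + 1) * c ^ n = 1) :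
    StrictAntiOn (runPoly A n) (Set.Icc 0 c) := by
  refine strictAntiOn_of_hasDerivWithinAt_neg (convex_Icc 0 c) (continuous_runPoly A n).continuousOn
    (fun x _ => (hasDerivAt_runPoly A n x).hasDerivWithinAt) fun x hx => ?_
  rw [interior_Icc] at hx
  have := pow_lt_pow_left₀ hx.2 hx.1.le hn
  have : A * (n + 1) * x ^ n < A * (n + 1) * c ^ n := by gcongr
  linarith

lemma runPoly_strictMonoOn (hA : 0 < A) (hn : n ≠ 0) (hc : A * (n + 1) * c ^ n = 1)
    (hc0 : 0 ≤ c) : StrictMonoOn (runPoly A n) (Set.Ici c) := by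
  refine strictMonoOn_of_hasDerivWithinAt_pos (convex_Ici c) (continuous_runPoly A n).continuousOn
    (fun x _ => (hasDerivAt_runPoly A n x).hasDerivWithinAt) fun x hx => ?_
  rw [interior_Ici] at hx
  have := pow_lt_pow_left₀ hx hc0 hn
  have : A * (n + 1) * c ^ n < A * (n + 1) * x ^ n := by gcongr
  linarith

lemma runPoly_crit (hc : A * (n + 1) * c ^ n = 1) : runPoly A n c = 1 - n / (n + 1) * c := by
  unfold runPoly
  field_simp
  linear_combination c * hc

lemma runPoly_lt_of_lt_crit (hA : 0 < A) (hn : n ≠ 0) (hc : A * (n + 1) * c ^ n = 1)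
    {w : ℝ} (hw : 0 < w) (hwc : w < c) : runPoly A n w < 1 - n / (n + 1) * w := by
  have hwn : A * (n + 1) * w ^ n < 1 :=
    calc A * (n + 1) * w ^ n < A * (n + 1) * c ^ n := by gcongr
      _ = 1 := hc
  have : A * w ^ (n + 1) < w / (n + 1) := by
    rw [lt_div_iff₀ (by positivity), pow_succ]
    nlinarith [mul_lt_mul_of_pos_left hwn hw]
  have : n / (n + 1) * w = w - w / (n + 1) := by field_simp; ring
  unfold runPoly
  linarith

lemma runPoly_crit_lt (hA : 0 < A) (hn : n ≠ 0) (hc : A * (n + 1) * c ^ n = 1) (hc0 : 0 ≤ c)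
    {w : ℝ} (hw : 0 ≤ w) (hwc : w ≠ c) : runPoly A n c < runPoly A n w := by
  rcases hwc.lt_or_gt with h | h
  · exact runPoly_strictAntiOn hA hn hc ⟨hw, h.le⟩ ⟨hc0, le_rfl⟩ h
  · exact runPoly_strictMonoOn hA hn hc hc0 (Set.mem_Ici.2 le_rfl) h.le h

lemma div_lt_crit_of_runPoly_crit_neg (hn : n ≠ 0) (hc : A * (n + 1) * c ^ n = 1)
    (hneg : runPoly A n c < 0) : ((n : ℝ) + 1) / n < c := by
  rw [runPoly_crit hc] at hneg
  have hn0 : (0 : ℝ) < n := by positivity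
  rw [div_lt_iff₀ hn0]
  rw [sub_neg, div_mul_eq_mul_div, one_lt_div (by positivity)] at hneg
  linarith

lemma eq_or_eq_of_runPoly_eq_zero (hA : 0 < A) (hn : n ≠ 0) (hc : A * (n + 1) * c ^ n = 1)
    (hc0 : 0 ≤ c) {a b w : ℝ} (ha : 0 ≤ a) (hac : a ≤ c) (hcb : c ≤ b) (hfa : runPoly A n a = 0)
    (hfb : runPoly A n b = 0) (hw : 0 ≤ w) (hfw : runPoly A n w = 0) : w = a ∨ w = b := by
  rcases le_total w c with h | h
  · exact .inl <| (runPoly_strictAntiOn hA hn hc).injOn ⟨hw, h⟩ ⟨ha, hac⟩ (hfw.trans hfa.symm)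
  · exact .inr <| (runPoly_strictMonoOn hA hn hc hc0).injOn h hcb (hfw.trans hfb.symm)

lemma exists_runPoly_eq_zero_Ioo (hA : 0 < A) (hn : n ≠ 0) (hc : A * (n + 1) * c ^ n = 1)
    (hdc : ((n : ℝ) + 1) / n < c) : ∃ w ∈ Set.Ioo 1 (((n : ℝ) + 1) / n), runPoly A n w = 0 := by
  have hn0 : (0 : ℝ) < n := by positivity
  have hd1 : 1 < ((n : ℝ) + 1) / n := (one_lt_div hn0).2 (lt_add_one _)
  have hfd : runPoly A n (((n : ℝ) + 1) / n) < 0 := by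
    have := runPoly_lt_of_lt_crit hA hn hc (by positivity) hdc
    have hd : 1 - n / (n + 1) * (((n : ℝ) + 1) / n) = 0 := by field_simp; ring
    rwa [hd] at this
  have hf1 : runPoly A n 1 = A := by simp [runPoly]
  exact intermediate_value_Ioo' hd1.le (continuous_runPoly A n).continuousOn ⟨hfd, by rwa [hf1]⟩

-- `1/A` lies beyond the critical point and `f(1/A) = 1 - 1/A + (1/A)^n ≥ 1`.
lemma exists_runPoly_eq_zero_gt (hA : 0 < A) (hA1 : A < 1) (hn : n ≠ 0)
    (hc : A * (n + 1) * c ^ n = 1) (hneg : runPoly A n c < 0) :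
    ∃ w, c < w ∧ runPoly A n w = 0 := by
  have hM1 : 1 ≤ 1 / A := by rw [le_div_iff₀ hA]; linarith
  have hMn : 1 / A ≤ (1 / A) ^ n := le_self_pow₀ hM1 hn
  have hcM : c < 1 / A := by
    refine lt_of_pow_lt_pow_left₀ n (by positivity) (lt_of_lt_of_le ?_ hMn)
    rw [lt_div_iff₀ hA]
    have : (0 : ℝ) < n := by positivity
    have : 0 < A * c ^ n := by nlinarith
    nlinarith
  have hfM : 0 < runPoly A n (1 / A) := by
    have : A * (1 / A) ^ (n + 1) = (1 / A) ^ n := by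
      rw [pow_succ]; field_simp
    unfold runPoly
    linarith
  obtain ⟨w, hw, hfw⟩ :=
    intermediate_value_Ioo hcM.le (continuous_runPoly A n).continuousOn ⟨hneg, hfM⟩
  exact ⟨w, hw.1, hfw⟩

lemma exists_root_lt_of_crit_lt (hA : 0 < A) (hn : n ≠ 0) (hc : A * (n + 1) * c ^ n = 1)
    (hc0 : 0 ≤ c) {b : ℝ} (hcb : c < b) (hfb : runPoly A n b = 0) :
    ((n : ℝ) + 1) / n < c ∧ ∃ w₀ ∈ Set.Ioo 1 (((n : ℝ) + 1) / n), runPoly A n w₀ = 0 ∧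
      ∀ w, 0 ≤ w → runPoly A n w = 0 → w = w₀ ∨ w = b := by
  have hneg : runPoly A n c < 0 := hfb ▸ runPoly_crit_lt hA hn hc hc0 (hc0.trans hcb.le) hcb.ne'
  have hdc := div_lt_crit_of_runPoly_crit_neg hn hc hneg
  obtain ⟨w₀, hw₀, hfw₀⟩ := exists_runPoly_eq_zero_Ioo hA hn hc hdc
  exact ⟨hdc, w₀, hw₀, hfw₀, fun w hw hfw => eq_or_eq_of_runPoly_eq_zero hA hn hc hc0
    (zero_le_one.trans hw₀.1.le) (hw₀.2.trans hdc).le hcb.le hfw₀ hfb hw hfw⟩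

lemma exists_root_gt_of_lt_crit (hA : 0 < A) (hA1 : A < 1) (hn : n ≠ 0)
    (hc : A * (n + 1) * c ^ n = 1) (hc0 : 0 ≤ c) {b : ℝ} (hb0 : 0 ≤ b) (hbc : b < c)
    (hfb : runPoly A n b = 0) :
    ((n : ℝ) + 1) / n < c ∧ ∃ w₀, c < w₀ ∧ runPoly A n w₀ = 0 ∧
      ∀ w, 0 ≤ w → runPoly A n w = 0 → w = b ∨ w = w₀ := by
  have hneg : runPoly A n c < 0 := hfb ▸ runPoly_crit_lt hA hn hc hc0 hb0 hbc.ne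
  obtain ⟨w₀, hcw, hfw₀⟩ := exists_runPoly_eq_zero_gt hA hA1 hn hc hneg
  exact ⟨div_lt_crit_of_runPoly_crit_neg hn hc hneg, w₀, hcw, hfw₀, fun w hw hfw =>
    eq_or_eq_of_runPoly_eq_zero hA hn hc hc0 hb0 hbc.le hcw.le hfb hfw₀ hw hfw⟩

end RunPoly

section Bernoulli

variable {p r : ℝ} {ℓ : ℕ}

lemma runPoly_one_div_eq_zero (hp : p ≠ 0) (ℓ : ℕ) : runPoly (p ^ ℓ * (1 - p)) ℓ (1 / p) = 0 := by
  unfold runPoly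
  rw [one_div, inv_pow, pow_succ, mul_inv]
  field_simp
  ring

lemma runPoly_crit_of_pow_eq (hp : 0 < p) (hp1 : p < 1) (hr : r ^ ℓ = (ℓ + 1) * (1 - p)) :
    p ^ ℓ * (1 - p) * (ℓ + 1) * (1 / (p * r)) ^ ℓ = 1 := by
  have : 0 < 1 - p := by linarith
  rw [div_pow, one_pow, mul_pow, hr]
  field_simp

lemma one_div_mul_lt_one_div (hp : 0 < p) (hℓ : ℓ ≠ 0) (hr0 : 0 < r)
    (hr : r ^ ℓ = (ℓ + 1) * (1 - p)) (h : p < ℓ / (ℓ + 1)) : 1 / (p * r) < 1 / p := by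
  have hr1 : 1 < r := by
    rw [lt_div_iff₀ (by positivity)] at h
    rw [← one_lt_pow_iff_of_nonneg hr0.le hℓ, hr]
    linarith
  exact one_div_lt_one_div_of_lt hp (lt_mul_of_one_lt_right hp hr1)

lemma one_div_lt_one_div_mul (hp : 0 < p) (hℓ : ℓ ≠ 0) (hr0 : 0 < r)
    (hr : r ^ ℓ = (ℓ + 1) * (1 - p)) (h : ℓ / (ℓ + 1) < p) : 1 / p < 1 / (p * r) := by
  have hr1 : r < 1 := by
    rw [div_lt_iff₀ (by positivity)] at h
    rw [← pow_lt_one_iff_of_nonneg hr0.le hℓ, hr]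
    linarith
  exact one_div_lt_one_div_of_lt (by positivity) (mul_lt_of_lt_one_right hp hr1)

lemma one_div_mul_eq_one_div (hℓ : ℓ ≠ 0) (hr0 : 0 < r) (hr : r ^ ℓ = (ℓ + 1) * (1 - p))
    (h : p = ℓ / (ℓ + 1)) : 1 / (p * r) = 1 / p := by
  have hr1 : r = 1 := by
    rw [← pow_eq_one_iff_of_nonneg hr0.le hℓ, hr, h]
    field_simp
    ring
  rw [hr1, mul_one]

end Bernoulli

/-- real roots of `f(w) = 1 - w + p^ℓ q w^{ℓ+1}` and their location. -/
theorem stmt16 (p : ℝ) (hp : 0 < p) (hp1 : p < 1) (ℓ : ℕ) (hℓ : 1 ≤ ℓ) :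
    (1 - 1 / p + p ^ ℓ * (1 - p) * (1 / p) ^ (ℓ + 1) = 0) ∧
    ∃ w₀ : ℝ, 1 < w₀ ∧ 1 - w₀ + p ^ ℓ * (1 - p) * w₀ ^ (ℓ + 1) = 0 ∧
      (∀ w : ℝ, 0 < w → 1 - w + p ^ ℓ * (1 - p) * w ^ (ℓ + 1) = 0 → w = w₀ ∨ w = 1 / p) ∧
      (p < (ℓ : ℝ) / (ℓ + 1) →
        w₀ < ((ℓ : ℝ) + 1) / ℓ ∧
        ((ℓ : ℝ) + 1) / ℓ < 1 / (p * (((ℓ : ℝ) + 1) * (1 - p)) ^ ((1 : ℝ) / ℓ)) ∧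
        1 / (p * (((ℓ : ℝ) + 1) * (1 - p)) ^ ((1 : ℝ) / ℓ)) < 1 / p) ∧
      (((ℓ : ℝ) / (ℓ + 1) < p) →
        1 / p < ((ℓ : ℝ) + 1) / ℓ ∧
        ((ℓ : ℝ) + 1) / ℓ < 1 / (p * (((ℓ : ℝ) + 1) * (1 - p)) ^ ((1 : ℝ) / ℓ)) ∧
        1 / (p * (((ℓ : ℝ) + 1) * (1 - p)) ^ ((1 : ℝ) / ℓ)) < w₀) ∧
      (p = (ℓ : ℝ) / (ℓ + 1) → w₀ = 1 / p ∧ w₀ = ((ℓ : ℝ) + 1) / ℓ) := by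
  have hℓ0 : ℓ ≠ 0 := by omega
  have hq : 0 < 1 - p := by linarith
  have hA : 0 < p ^ ℓ * (1 - p) := by positivity
  have hA1 : p ^ ℓ * (1 - p) < 1 :=
    mul_lt_one_of_nonneg_of_lt_one_left (by positivity) (pow_lt_one₀ hp.le hp1 hℓ0) (by linarith)
  set r := (((ℓ : ℝ) + 1) * (1 - p)) ^ ((1 : ℝ) / ℓ) with hr_def
  have hr0 : 0 < r := by positivity
  have hr : r ^ ℓ = (ℓ + 1) * (1 - p) := by
    rw [hr_def, one_div, Real.rpow_inv_natCast_pow (by positivity) hℓ0]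
  have hc := runPoly_crit_of_pow_eq hp hp1 hr
  have hc0 : 0 ≤ 1 / (p * r) := by positivity
  have hroot := runPoly_one_div_eq_zero hp.ne' ℓ
  have hd1 : 1 < ((ℓ : ℝ) + 1) / ℓ := (one_lt_div (by positivity)).2 (lt_add_one _)
  refine ⟨hroot, ?_⟩
  rcases lt_trichotomy p (ℓ / (ℓ + 1)) with h | h | h
  · have hcb := one_div_mul_lt_one_div hp hℓ0 hr0 hr h
    obtain ⟨hdc, w₀, hw₀, hfw₀, huniq⟩ := exists_root_lt_of_crit_lt hA hℓ0 hc hc0 hcb hroot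
    exact ⟨w₀, hw₀.1, hfw₀, fun w hw => huniq w hw.le, fun _ => ⟨hw₀.2, hdc, hcb⟩,
      fun h' => absurd h h'.asymm, fun h' => absurd h' h.ne⟩
  · have hb : 1 / p = (ℓ + 1) / ℓ := by rw [h, one_div_div]
    have hcb := one_div_mul_eq_one_div hℓ0 hr0 hr h
    refine ⟨1 / p, hb ▸ hd1, hroot, fun w hw hfw => .inl ?_, fun h' => absurd h h'.ne,
      fun h' => absurd h h'.ne', fun _ => ⟨rfl, hb⟩⟩
    exact (eq_or_eq_of_runPoly_eq_zero hA hℓ0 hc hc0 (by positivity) hcb.ge hcb.le hroot hroot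
      hw.le hfw).elim id id
  · have hbc := one_div_lt_one_div_mul hp hℓ0 hr0 hr h
    obtain ⟨hdc, w₀, hcw, hfw₀, huniq⟩ :=
      exists_root_gt_of_lt_crit hA hA1 hℓ0 hc hc0 (by positivity) hbc hroot
    have hbd : 1 / p < (ℓ + 1) / ℓ :=
      one_div_div (ℓ : ℝ) (ℓ + 1) ▸ one_div_lt_one_div_of_lt (by positivity) h
    exact ⟨w₀, by linarith, hfw₀, fun w hw hfw => (huniq w hw.le hfw).symm,
      fun h' => absurd h h'.asymm, fun _ => ⟨hbd, hdc, hcw⟩, fun h' => absurd h' h.ne'⟩
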